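/- Factorization of the Dotsenko–Fateev operator at g = −1: with Dn₁ = x²(x−1)²∂ − x(x−1)(ax+bx+2cx−a−c−2x+1) and Dn₂ = ∂² − 2(ax+bx+2cx−a−c)/(x(x−1))·∂ + 2c(2a+1+2b+2c)/(x(x−1)), for every function u holomorphic on an open set U ⊆ ℂ∖{0,1} and every x ∈ U one has (DF(a,b,c,−1)u)(x) = (Dn₁(Dn₂ u))(x). -/

import Mathlib

/-!
`Dn₂ = ∂² − p ∂ + q` with `p, q` rational functions regular off `{0, 1}`, so by the product
and quotient rules `(Dn₂ u)'` is linear in `u, u', u'', u'''` with coefficients built from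
`p, p', q, q'`. Substituting into `Dn₁` and clearing the denominator `x²(x−1)²` leaves a
polynomial identity in `x, a, b, c` and the jet of `u`. Analyticity of `u` on the open set
`U` is what makes `u'''` exist at `x`.
-/

/-- Coefficient of ∂² of the Dotsenko–Fateev operator. -/
noncomputable def DF1 (a b c g x : ℂ) : ℂ :=
  -(x - 1) * x * (3*a*x + 3*b*x + 6*c*x + 2*g*x - 3*a - 3*c - g)

/-- Coefficient of ∂ of the Dotsenko–Fateev operator. -/
noncomputable def DF2 (a b c g x : ℂ) : ℂ :=
  (2*a^2 + 4*a*b + 12*a*c + 3*a*g + 2*b^2 + 12*b*c + 3*b*g + 12*c^2 + 8*c*g + g^2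
      + a + b + 6*c + g) * x^2
  + (-4*a^2 - 4*a*b - 16*a*c - 4*a*g - 8*b*c - 2*b*g - 12*c^2 - 8*c*g - g^2
      - 2*a - 6*c - g) * x
  + (2*a^2 + 4*a*c + a*g + 2*c^2 + c*g + a + c)

/-- Coefficient of 1 of the Dotsenko–Fateev operator. -/
noncomputable def DF3 (a b c g x : ℂ) : ℂ :=
  c * (2*a + 2*b + 2*c + g + 2) * (-(2*a + 2*b + 4*c + 2*g + 2)*x + 2*a + 2*c + g + 1)

/-- The Dotsenko–Fateev operator DF(a,b,c,g) acting on a function u. -/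
noncomputable def DFop (a b c g : ℂ) (u : ℂ → ℂ) : ℂ → ℂ := fun x =>
  x^2*(x - 1)^2 * iteratedDeriv 3 u x + DF1 a b c g x * iteratedDeriv 2 u x
    + DF2 a b c g x * deriv u x + DF3 a b c g x * u x

/-- The second factor Dn₂ acting on a function u. -/
noncomputable def Dn2 (a b c : ℂ) (u : ℂ → ℂ) : ℂ → ℂ := fun x =>
  iteratedDeriv 2 u x
  - 2*(a*x + b*x + 2*c*x - a - c)/(x*(x - 1)) * deriv u x
  + 2*c*(2*a + 1 + 2*b + 2*c)/(x*(x - 1)) * u x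

/-- The first factor Dn₁ acting on a function w. -/
noncomputable def Dn1 (a b c : ℂ) (w : ℂ → ℂ) : ℂ → ℂ := fun x =>
  x^2*(x - 1)^2 * deriv w x - x*(x - 1)*(a*x + b*x + 2*c*x - a - c - 2*x + 1) * w x

variable {𝕜 : Type*} [NontriviallyNormedField 𝕜]

noncomputable def secondOrderOp (p q u : 𝕜 → 𝕜) : 𝕜 → 𝕜 := fun y =>
  iteratedDeriv 2 u y - p y * deriv u y + q y * u y

theorem hasDerivAt_secondOrderOp [CompleteSpace 𝕜] {p q u : 𝕜 → 𝕜} {p' q' x : 𝕜}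
    (hu : AnalyticAt 𝕜 u x) (hp : HasDerivAt p p' x) (hq : HasDerivAt q q' x) :
    HasDerivAt (secondOrderOp p q u)
      (iteratedDeriv 3 u x - (p' * deriv u x + p x * iteratedDeriv 2 u x)
        + (q' * u x + q x * deriv u x)) x := by
  have h2 : iteratedDeriv 2 u = deriv (deriv u) := by
    rw [iteratedDeriv_succ, iteratedDeriv_one]
  have h3 : iteratedDeriv 3 u = deriv (iteratedDeriv 2 u) := iteratedDeriv_succ
  have hu0 : HasDerivAt u (deriv u x) x := hu.differentiableAt.hasDerivAt
  have hu1 : HasDerivAt (deriv u) (iteratedDeriv 2 u x) x := by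
    rw [h2]; exact hu.deriv.differentiableAt.hasDerivAt
  have hu2 : HasDerivAt (iteratedDeriv 2 u) (iteratedDeriv 3 u x) x := by
    rw [h3, h2]; exact hu.deriv.deriv.differentiableAt.hasDerivAt
  exact (hu2.sub (hp.mul hu1)).add (hq.mul hu0)

theorem HasDerivAt.div_mul_sub_one {N : 𝕜 → 𝕜} {N' x : 𝕜} (hN : HasDerivAt N N' x)
    (hx0 : x ≠ 0) (hx1 : x ≠ 1) :
    HasDerivAt (fun y => N y / (y * (y - 1)))
      ((N' * (x * (x - 1)) - N x * (2 * x - 1)) / (x * (x - 1)) ^ 2) x := by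
  have hD : HasDerivAt (fun y : 𝕜 => y * (y - 1)) (2 * x - 1) x :=
    ((hasDerivAt_id' x).mul ((hasDerivAt_id' x).sub_const 1)).congr_deriv (by ring)
  exact hN.div hD (mul_ne_zero hx0 (sub_ne_zero.mpr hx1))

theorem DF_factorization_g_eq_neg_one (a b c : ℂ) (U : Set ℂ) (hU : IsOpen U)
    (hU0 : (0 : ℂ) ∉ U) (hU1 : (1 : ℂ) ∉ U)
    (u : ℂ → ℂ) (hu : DifferentiableOn ℂ u U) (x : ℂ) (hx : x ∈ U) :
    DFop a b c (-1) u x = Dn1 a b c (Dn2 a b c u) x := by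
  have hx0 : x ≠ 0 := ne_of_mem_of_not_mem hx hU0
  have hx1 : x ≠ 1 := ne_of_mem_of_not_mem hx hU1
  have hP : HasDerivAt (fun y => 2 * (a * y + b * y + 2 * c * y - a - c)) (2 * (a + b + 2 * c)) x :=
    ((((hasDerivAt_id' x).const_mul (a + b + 2 * c)).sub_const (a + c)).const_mul 2
      |>.congr_of_eventuallyEq (.of_forall fun y => by ring)).congr_deriv (by ring)
  have hDn2 : HasDerivAt (Dn2 a b c u) _ x :=
    hasDerivAt_secondOrderOp (hu.analyticAt (hU.mem_nhds hx)) (hP.div_mul_sub_one hx0 hx1)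
      ((hasDerivAt_const x (2 * c * (2 * a + 1 + 2 * b + 2 * c))).div_mul_sub_one hx0 hx1)
  rw [Dn1, hDn2.deriv]
  simp only [DFop, DF1, DF2, DF3, Dn2]
  field_simp
  ring
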